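/- With the notation of the context (constant-rank-k ruled parametrization Φ with unit normal field N), fix (u,v) ∈ U×V and define φ : ℝ^k → ℝ by φ(s) = (Φ(u,v) − α(s))·N(s). Then s = u is a critical point of φ (i.e. ∇φ(u) = 0), the Hessian of φ at s = u has entries ∂²φ/∂s_j∂s_{j'}(u) = −⟨∂Φ/∂u_{j'}(u,v), ∂N/∂u_j(u)⟩, and this k×k Hessian matrix is invertible; hence s = u is an isolated nondegenerate critical point of φ. -/

import Mathlib

/-!
On `U` the ruling terms drop out of `φ` because `w_l ⊥ N`, so near `u` we have
`φ(s) = ⟨g(u) - g(s), N(s)⟩` with `g = Φ(·, v)`. As `Dg(s) ⊥ N(s)`, this gives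
`Dφ(s) = ⟨g(u) - g(s), DN(s)·⟩`, which vanishes at `u`, and one more differentiation gives the
Hessian `-⟨Dg(u)·, DN(u)·⟩`. Differentiating `⟨Dg(s)a, N(s)⟩ = 0` turns this into the second
fundamental form `⟨D²g(u)(·,·), N(u)⟩`, which is symmetric and, by the rank hypothesis,
nondegenerate. A map whose derivative at `u` is injective does not return to its value at `u`
nearby; applied to `Dφ`, this makes `u` an isolated critical point.
-/

open Filter Topology
open scoped RealInnerProductSpace

section General

variable {E F G : Type*} [NormedAddCommGroup E] [NormedSpace ℝ E]
  [NormedAddCommGroup F] [InnerProductSpace ℝ F] [NormedAddCommGroup G] [NormedSpace ℝ G]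

theorem fderiv_apply_const {E' : Type*} [NormedAddCommGroup E'] [NormedSpace ℝ E']
    {f : E → E' →L[ℝ] G} {x : E} (hf : DifferentiableAt ℝ f x) (v : E') (w : E) :
    fderiv ℝ (fun y => f y v) x w = fderiv ℝ f x w v := by
  simp [fderiv_clm_apply hf (differentiableAt_const v)]

theorem ContDiff.differentiable_fderiv {f : E → G} (hf : ContDiff ℝ 2 f) :
    Differentiable ℝ (fderiv ℝ f) :=
  (hf.fderiv_right (m := 1) (by norm_num)).differentiable one_ne_zero

theorem inner_fderiv_apply_eq_neg_of_eventually_inner_eq_zero {a b : E → F} {x : E}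
    (hab : ∀ᶠ y in 𝓝 x, ⟪a y, b y⟫ = 0) (ha : DifferentiableAt ℝ a x)
    (hb : DifferentiableAt ℝ b x) (v : E) :
    ⟪fderiv ℝ a x v, b x⟫ = -⟪a x, fderiv ℝ b x v⟫ := by
  have h := fderiv_inner_apply (𝕜 := ℝ) ha hb v
  rw [EventuallyEq.fderiv_eq (f := fun _ => (0 : ℝ)) hab, fderiv_const_apply, zero_apply] at h
  linarith

theorem EuclideanSpace.inner_apply_eq_zero_of_single {ι : Type*} [Fintype ι] [DecidableEq ι]
    (L : EuclideanSpace ℝ ι →L[ℝ] F) (n : F)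
    (hL : ∀ i, ⟪L (EuclideanSpace.single i 1), n⟫ = 0) (y : EuclideanSpace ℝ ι) :
    ⟪L y, n⟫ = 0 := by
  have h : (innerSL ℝ n).comp L = 0 :=
    ContinuousLinearMap.coe_injective <| (EuclideanSpace.basisFun ι ℝ).toBasis.ext
      fun i => by simpa [real_inner_comm] using hL i
  simpa [real_inner_comm] using DFunLike.congr_fun h y

theorem Module.Basis.injective_of_det_ne_zero {ι : Type*} [Fintype ι] [DecidableEq ι]
    (b : Module.Basis ι ℝ E) (H : E →L[ℝ] E →L[ℝ] ℝ)
    (hH : (Matrix.of fun i j => H (b i) (b j)).det ≠ 0) : Function.Injective H := by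
  have hsep : (ContinuousLinearMap.toLinearMap₁₂ H).SeparatingLeft := by
    rw [← LinearMap.separatingLeft_toMatrix₂_iff b b, Matrix.separatingLeft_iff_det_ne_zero]
    convert hH using 2
    ext i j
    simp
  rw [LinearMap.separatingLeft_iff_ker_eq_bot, LinearMap.ker_eq_bot] at hsep
  exact fun x y hxy => hsep (by ext; simp [hxy])

theorem HasFDerivAt.exists_pos_ball_eq_imp_eq_of_injective [FiniteDimensional ℝ E] {f : E → G}
    {f' : E →L[ℝ] G} {x : E} (hf : HasFDerivAt f f' x) (hf' : Function.Injective f') :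
    ∃ ε > 0, ∀ y ∈ Metric.ball x ε, f y = f x → y = x := by
  obtain ⟨C, -, hC⟩ := LinearMap.exists_antilipschitzWith (f' : E →ₗ[ℝ] G)
    (LinearMap.ker_eq_bot.mpr hf')
  obtain ⟨ε, hε, hball⟩ :=
    Metric.eventually_nhds_iff.mp (eventually_nhdsWithin_iff.mp (hf.eventually_ne ⟨C, hC⟩))
  exact ⟨ε, hε, fun y hy hfy => by_contra fun hne => hball hy hne hfy⟩

end General

section Phase

variable {E F : Type*} [NormedAddCommGroup E] [NormedSpace ℝ E]
  [NormedAddCommGroup F] [InnerProductSpace ℝ F] {g N : E → F} {φ : E → ℝ} {u : E}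

theorem inner_fderiv_apply_fderiv_eq_neg (hg : ContDiff ℝ 2 g) (hN : Differentiable ℝ N)
    (hT : ∀ᶠ s in 𝓝 u, ∀ y, ⟪fderiv ℝ g s y, N s⟫ = 0) (a b : E) :
    ⟪fderiv ℝ g u a, fderiv ℝ N u b⟫ = -⟪fderiv ℝ (fderiv ℝ g) u b a, N u⟫ := by
  have hg' := hg.differentiable_fderiv
  rw [← fderiv_apply_const (hg' u), inner_fderiv_apply_eq_neg_of_eventually_inner_eq_zero
    (hT.mono fun s hs => hs a) ((hg'.clm_apply (differentiable_const a)) u) (hN u), neg_neg]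

theorem inner_fderiv_apply_fderiv_comm (hg : ContDiff ℝ 2 g) (hN : Differentiable ℝ N)
    (hT : ∀ᶠ s in 𝓝 u, ∀ y, ⟪fderiv ℝ g s y, N s⟫ = 0) (a b : E) :
    ⟪fderiv ℝ g u a, fderiv ℝ N u b⟫ = ⟪fderiv ℝ g u b, fderiv ℝ N u a⟫ := by
  rw [inner_fderiv_apply_fderiv_eq_neg hg hN hT, inner_fderiv_apply_fderiv_eq_neg hg hN hT,
    hg.contDiffAt.isSymmSndFDerivAt (by simp) a b]

theorem eventually_fderiv_phase_apply (hg : Differentiable ℝ g) (hN : Differentiable ℝ N)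
    (hT : ∀ᶠ s in 𝓝 u, ∀ y, ⟪fderiv ℝ g s y, N s⟫ = 0)
    (hφ : ∀ᶠ s in 𝓝 u, φ s = ⟪g u - g s, N s⟫) :
    ∀ᶠ s in 𝓝 u, ∀ y, fderiv ℝ φ s y = ⟪g u - g s, fderiv ℝ N s y⟫ := by
  filter_upwards [hφ.eventually_nhds, hT] with s hφs hTs y
  rw [EventuallyEq.fderiv_eq hφs, fderiv_inner_apply (𝕜 := ℝ)
    ((differentiable_const _).fun_sub hg s) (hN s), fderiv_const_sub,
    neg_apply, inner_neg_left, hTs y, neg_zero, add_zero]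

theorem fderiv_phase_eq_zero (hg : Differentiable ℝ g) (hN : Differentiable ℝ N)
    (hT : ∀ᶠ s in 𝓝 u, ∀ y, ⟪fderiv ℝ g s y, N s⟫ = 0)
    (hφ : ∀ᶠ s in 𝓝 u, φ s = ⟪g u - g s, N s⟫) : fderiv ℝ φ u = 0 := by
  ext y
  simpa using (eventually_fderiv_phase_apply hg hN hT hφ).self_of_nhds y

theorem fderiv_fderiv_phase_apply (hg : ContDiff ℝ 2 g) (hN : ContDiff ℝ 2 N)
    (hT : ∀ᶠ s in 𝓝 u, ∀ y, ⟪fderiv ℝ g s y, N s⟫ = 0)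
    (hφ : ∀ᶠ s in 𝓝 u, φ s = ⟪g u - g s, N s⟫)
    (e e' : E) :
    fderiv ℝ (fun s => fderiv ℝ φ s e') u e = -⟪fderiv ℝ g u e', fderiv ℝ N u e⟫ := by
  have hDφ : (fun s => fderiv ℝ φ s e') =ᶠ[𝓝 u] fun s => ⟪g u - g s, fderiv ℝ N s e'⟫ :=
    (eventually_fderiv_phase_apply (hg.differentiable two_ne_zero) (hN.differentiable two_ne_zero)
      hT hφ).mono fun s hs => hs e'
  rw [hDφ.fderiv_eq, fderiv_inner_apply (𝕜 := ℝ)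
    ((differentiable_const _).fun_sub (hg.differentiable two_ne_zero) u)
    ((hN.differentiable_fderiv.clm_apply (differentiable_const e')) u), sub_self,
    inner_zero_left, zero_add, fderiv_const_sub, neg_apply, inner_neg_left,
    inner_fderiv_apply_fderiv_comm hg (hN.differentiable two_ne_zero) hT]

end Phase

theorem statement11 (d k : ℕ)
    (U : Set (EuclideanSpace ℝ (Fin k))) (V : Set (EuclideanSpace ℝ (Fin (d - k))))
    (hUo : IsOpen U)
    (α : EuclideanSpace ℝ (Fin k) → EuclideanSpace ℝ (Fin (d + 1)))
    (w : Fin (d - k) → EuclideanSpace ℝ (Fin k) → EuclideanSpace ℝ (Fin (d + 1)))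
    (hα : ContDiff ℝ (⊤ : ℕ∞) α) (hw : ∀ l, ContDiff ℝ (⊤ : ℕ∞) (w l))
    (Φ : EuclideanSpace ℝ (Fin k) → EuclideanSpace ℝ (Fin (d - k)) →
      EuclideanSpace ℝ (Fin (d + 1)))
    (hΦ : ∀ u v, Φ u v = α u + ∑ l : Fin (d - k), v l • w l u)
    (N : EuclideanSpace ℝ (Fin k) → EuclideanSpace ℝ (Fin (d + 1)))
    (hN : ContDiff ℝ (⊤ : ℕ∞) N)
    (horth1 : ∀ u ∈ U, ∀ v ∈ V, ∀ j : Fin k,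
      (inner ℝ (fderiv ℝ (fun u' => Φ u' v) u (EuclideanSpace.single j 1)) (N u) : ℝ) = 0)
    (horth2 : ∀ u ∈ U, ∀ l : Fin (d - k), (inner ℝ (w l u) (N u) : ℝ) = 0)
    (hrank : ∀ u ∈ U, ∀ v ∈ V,
      (Matrix.of fun j j' : Fin k =>
        (inner ℝ
          (fderiv ℝ (fun u1 => fderiv ℝ (fun u2 => Φ u2 v) u1 (EuclideanSpace.single j' 1)) u
            (EuclideanSpace.single j 1)) (N u) : ℝ)).det ≠ 0)
    (u : EuclideanSpace ℝ (Fin k)) (v : EuclideanSpace ℝ (Fin (d - k)))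
    (hu : u ∈ U) (hv : v ∈ V)
    (φ : EuclideanSpace ℝ (Fin k) → ℝ)
    (hφ : ∀ s, φ s = (inner ℝ (Φ u v - α s) (N s) : ℝ)) :
    -- `s = u` is a critical point of `φ`
    fderiv ℝ φ u = 0 ∧
    -- the Hessian entries of `φ` at `s = u`
    (∀ j j' : Fin k,
      fderiv ℝ (fun s => fderiv ℝ φ s (EuclideanSpace.single j' 1)) u
          (EuclideanSpace.single j 1) =
        -(inner ℝ (fderiv ℝ (fun u' => Φ u' v) u (EuclideanSpace.single j' 1))
            (fderiv ℝ N u (EuclideanSpace.single j 1)) : ℝ)) ∧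
    -- the Hessian matrix is invertible
    (Matrix.of fun j j' : Fin k =>
      fderiv ℝ (fun s => fderiv ℝ φ s (EuclideanSpace.single j' 1)) u
        (EuclideanSpace.single j 1)).det ≠ 0 ∧
    -- hence `u` is an isolated critical point of `φ`
    (∃ ε : ℝ, 0 < ε ∧ ∀ s ∈ Metric.ball u ε, fderiv ℝ φ s = 0 → s = u) := by
  have h2 : (2 : WithTop ℕ∞) ≤ ((⊤ : ℕ∞) : WithTop ℕ∞) := WithTop.coe_le_coe.mpr le_top
  have hg : ContDiff ℝ 2 (fun s => Φ s v) := by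
    simp only [hΦ]
    exact (hα.of_le h2).add (ContDiff.sum fun l _ => ((hw l).of_le h2).const_smul (v l))
  have hN2 : ContDiff ℝ 2 N := hN.of_le h2
  have hT : ∀ᶠ s in 𝓝 u, ∀ y, ⟪fderiv ℝ (fun s => Φ s v) s y, N s⟫ = 0 := by
    filter_upwards [hUo.mem_nhds hu] with s hs
    exact EuclideanSpace.inner_apply_eq_zero_of_single _ _ (horth1 s hs v hv)
  have hφU : ∀ᶠ s in 𝓝 u, φ s = ⟪Φ u v - Φ s v, N s⟫ := by
    filter_upwards [hUo.mem_nhds hu] with s hs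
    rw [hφ, hΦ s v, ← sub_sub, inner_sub_left (Φ u v - α s), sum_inner]
    simp [real_inner_smul_left, horth2 s hs]
  have hess := fun j j' : Fin k => fderiv_fderiv_phase_apply hg hN2 hT hφU
    (EuclideanSpace.single j 1) (EuclideanSpace.single j' 1)
  have hφC : ContDiff ℝ 2 φ := by
    rw [funext hφ]
    exact (contDiff_const.sub (hα.of_le h2)).inner ℝ hN2
  have hDφ := hφC.differentiable_fderiv
  have hdet : (Matrix.of fun j j' : Fin k =>
      fderiv ℝ (fun s => fderiv ℝ φ s (EuclideanSpace.single j' 1)) u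
        (EuclideanSpace.single j 1)).det ≠ 0 := by
    convert hrank u hu v hv using 3
    ext j j'
    rw [hess, inner_fderiv_apply_fderiv_eq_neg hg (hN2.differentiable two_ne_zero) hT, neg_neg,
      fderiv_apply_const (hg.differentiable_fderiv u)]
  have hinj : Function.Injective (fderiv ℝ (fderiv ℝ φ) u) :=
    (EuclideanSpace.basisFun (Fin k) ℝ).toBasis.injective_of_det_ne_zero _
      (by simpa [fderiv_apply_const (hDφ u)] using hdet)
  have hcrit := fderiv_phase_eq_zero (hg.differentiable two_ne_zero)
    (hN2.differentiable two_ne_zero) hT hφU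
  obtain ⟨ε, hε, hiso⟩ := (hDφ u).hasFDerivAt.exists_pos_ball_eq_imp_eq_of_injective hinj
  exact ⟨hcrit, hess, hdet, ε, hε, fun s hs hs0 => hiso s hs (hs0.trans hcrit.symm)⟩
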